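/- arXiv:0912.4045 — 3 statements merged into one kernel-verified Lean document; each statement's English description precedes it below -/
import Mathlib

section
/- Let δ ∈ ℝ^p satisfy ‖δ_{T₀ᶜ}‖₁ ≤ k₀‖δ_{T₀}‖₁, where T₀ is the set of indices of the s largest coordinates of δ in absolute value. Decompose T₀ᶜ into blocks T₁, T₂, … of size s (the last possibly smaller), where T₁ holds the s largest coordinates of δ_{T₀ᶜ} in absolute value, T₂ the next s largest, and so on. Then Σ_{k≥1} ‖δ_{T_k}‖₂ ≤ s^{-1/2}‖δ‖₁ ≤ (k₀+1)‖δ_{T₀}‖₂. -/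
/-!
Each block `T (k + 1)` has at most `s` coordinates, none larger in absolute value than any of the
`s` coordinates of the preceding block `T k`; so every coordinate of `T (k + 1)` is at most the
average `‖δ_{T k}‖₁ / s`, which gives `‖δ_{T (k+1)}‖₂ ≤ s^{-1/2} ‖δ_{T k}‖₁`. Summing over the
disjoint blocks gives the first inequality. The second is the cone condition followed by
Cauchy–Schwarz on `T₀`: `‖δ‖₁ ≤ (k₀ + 1) ‖δ_{T₀}‖₁ ≤ (k₀ + 1) √s ‖δ_{T₀}‖₂`.
-/

open Finset

noncomputable def l1 {p : ℕ} (v : Fin p → ℝ) : ℝ := ∑ i, |v i|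
noncomputable def l2 {p : ℕ} (v : Fin p → ℝ) : ℝ := Real.sqrt (∑ i, (v i) ^ 2)

def restr {p : ℕ} (T : Finset (Fin p)) (v : Fin p → ℝ) : Fin p → ℝ :=
  fun i => if i ∈ T then v i else 0

section Restriction

variable {p : ℕ}

lemma l1_restr (T : Finset (Fin p)) (v : Fin p → ℝ) :
    l1 (restr T v) = ∑ i ∈ T, |v i| := by
  simp [l1, restr, apply_ite abs, sum_ite_mem]

lemma l2_restr (T : Finset (Fin p)) (v : Fin p → ℝ) :
    l2 (restr T v) = Real.sqrt (∑ i ∈ T, v i ^ 2) := by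
  simp [l2, restr, ite_pow, sum_ite_mem]

lemma l1_eq_l1_restr_add_l1_restr_compl (T : Finset (Fin p)) (v : Fin p → ℝ) :
    l1 v = l1 (restr T v) + l1 (restr Tᶜ v) := by
  rw [l1_restr, l1_restr, l1, sum_add_sum_compl]

lemma sum_l1_restr_le_l1 {ι : Type*} [DecidableEq ι] {I : Finset ι} {T : ι → Finset (Fin p)}
    (hT : (I : Set ι).PairwiseDisjoint T) (v : Fin p → ℝ) :
    ∑ k ∈ I, l1 (restr (T k) v) ≤ l1 v := by
  simp only [l1_restr]
  rw [← sum_biUnion hT]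
  exact sum_le_univ_sum_of_nonneg fun i => abs_nonneg (v i)

lemma l1_restr_le_sqrt_card_mul_l2_restr (T : Finset (Fin p)) (v : Fin p → ℝ) :
    l1 (restr T v) ≤ Real.sqrt #T * l2 (restr T v) := by
  rw [l1_restr, l2_restr, ← Real.sqrt_mul (Nat.cast_nonneg _),
    Real.le_sqrt (sum_nonneg fun i _ => abs_nonneg _) (by positivity)]
  simpa only [sq_abs] using sq_sum_le_card_mul_sum_sq (s := T) (f := fun i => |v i|)

lemma sqrt_card_mul_l2_restr_le_l1_restr (v : Fin p → ℝ) {A B : Finset (Fin p)}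
    (hcard : #B ≤ #A) (hdom : ∀ i ∈ A, ∀ j ∈ B, |v j| ≤ |v i|) :
    Real.sqrt #A * l2 (restr B v) ≤ l1 (restr A v) := by
  set M := ∑ i ∈ A, |v i|
  have hM : 0 ≤ M := sum_nonneg fun i _ => abs_nonneg _
  have havg : ∀ j ∈ B, #A * |v j| ≤ M := fun j hj => by
    simpa only [sum_const, nsmul_eq_mul] using sum_le_sum fun i hi => hdom i hi j hj
  have hsq : #A * ∑ j ∈ B, v j ^ 2 ≤ M ^ 2 := by
    rcases (#A).eq_zero_or_pos with hA | hA
    · simp [hA, sq_nonneg]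
    have hsum : (#A : ℝ) ^ 2 * ∑ j ∈ B, v j ^ 2 ≤ #B * M ^ 2 := by
      rw [mul_sum, ← nsmul_eq_mul, ← sum_const]
      refine sum_le_sum fun j hj => ?_
      rw [← sq_abs (v j), ← mul_pow]
      exact pow_le_pow_left₀ (by positivity) (havg j hj) 2
    refine le_of_mul_le_mul_left ?_ (show (0 : ℝ) < #A by exact_mod_cast hA)
    calc (#A : ℝ) * (#A * ∑ j ∈ B, v j ^ 2) = #A ^ 2 * ∑ j ∈ B, v j ^ 2 := by ring
      _ ≤ #B * M ^ 2 := hsum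
      _ ≤ #A * M ^ 2 := by gcongr
  rw [l1_restr, l2_restr, ← Real.sqrt_mul (Nat.cast_nonneg _), Real.sqrt_le_left hM]
  exact hsq

end Restriction

theorem stmt1_general (p s K : ℕ) (k0 : ℝ) (hs : 1 ≤ s) (hk0 : 0 < k0)
    (δ : Fin p → ℝ)
    (T : ℕ → Finset (Fin p))
    -- the blocks partition {1,…,p}
    (hdisj : ∀ k l, k ≠ l → Disjoint (T k) (T l))
    -- T₀ holds the s largest coordinates of δ in absolute value
    (hT0card : (T 0).card = s)
    -- blocks of size s (the last possibly smaller), greedily ordered by decreasing |δ_i|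
    (hcard : ∀ k, 1 ≤ k → k < K → (T k).card = s)
    (hcardK : (T K).card ≤ s)
    (hmono : ∀ k l, k < l → ∀ i ∈ T k, ∀ j ∈ T l, |δ j| ≤ |δ i|)
    -- the cone condition w.r.t. T₀
    (hcone : l1 (restr (T 0)ᶜ δ) ≤ k0 * l1 (restr (T 0) δ)) :
    ∑ k ∈ Finset.Icc 1 K, l2 (restr (T k) δ) ≤ (Real.sqrt s)⁻¹ * l1 δ ∧
      (Real.sqrt s)⁻¹ * l1 δ ≤ (k0 + 1) * l2 (restr (T 0) δ) := by
  have hsqrt : 0 < Real.sqrt s := Real.sqrt_pos.mpr (by exact_mod_cast hs)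
  have hblock : ∀ k < K, l2 (restr (T (k + 1)) δ) ≤ (Real.sqrt s)⁻¹ * l1 (restr (T k) δ) := by
    intro k hk
    have hTk : #(T k) = s := by
      rcases k with _ | k
      exacts [hT0card, hcard _ (by omega) (by omega)]
    have hTk1 : #(T (k + 1)) ≤ s := by
      rcases (show k + 1 ≤ K from hk).eq_or_lt with hK | hK
      exacts [hK.symm ▸ hcardK, (hcard _ (by omega) hK).le]
    rw [le_inv_mul_iff₀ hsqrt, ← hTk]
    exact sqrt_card_mul_l2_restr_le_l1_restr δ (hTk ▸ hTk1) (hmono k (k + 1) k.lt_succ_self)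
  constructor
  · calc ∑ k ∈ Icc 1 K, l2 (restr (T k) δ) = ∑ k ∈ range K, l2 (restr (T (k + 1)) δ) := by
          rw [← Ico_add_one_right_eq_Icc, sum_Ico_eq_sum_range, add_tsub_cancel_right]
          simp only [add_comm]
      _ ≤ ∑ k ∈ range K, (Real.sqrt s)⁻¹ * l1 (restr (T k) δ) :=
          sum_le_sum fun k hk => hblock k (mem_range.mp hk)
      _ ≤ (Real.sqrt s)⁻¹ * l1 δ := by
          rw [← mul_sum]
          gcongr
          exact sum_l1_restr_le_l1 (fun k _ l _ hkl => hdisj k l hkl) δ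
  · rw [inv_mul_le_iff₀ hsqrt]
    calc l1 δ = l1 (restr (T 0) δ) + l1 (restr (T 0)ᶜ δ) := l1_eq_l1_restr_add_l1_restr_compl _ _
      _ ≤ (k0 + 1) * l1 (restr (T 0) δ) := by linarith
      _ ≤ (k0 + 1) * (Real.sqrt s * l2 (restr (T 0) δ)) := by
          gcongr
          rw [← hT0card]
          exact l1_restr_le_sqrt_card_mul_l2_restr _ _
      _ = Real.sqrt s * ((k0 + 1) * l2 (restr (T 0) δ)) := by ring

/-- block decomposition bound
Σ_{k≥1} ‖δ_{T_k}‖₂ ≤ s^{-1/2}‖δ‖₁ ≤ (k₀+1)‖δ_{T₀}‖₂. -/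
theorem stmt1 (p s K : ℕ) (k0 : ℝ) (hs : 1 ≤ s) (hsp : 2 * s ≤ p) (hk0 : 0 < k0)
    (δ : Fin p → ℝ)
    (T : ℕ → Finset (Fin p))
    -- the blocks partition {1,…,p}
    (hdisj : ∀ k l, k ≠ l → Disjoint (T k) (T l))
    (hunion : (Finset.range (K + 1)).biUnion T = Finset.univ)
    -- T₀ holds the s largest coordinates of δ in absolute value
    (hT0card : (T 0).card = s)
    -- blocks of size s (the last possibly smaller), greedily ordered by decreasing |δ_i|
    (hcard : ∀ k, 1 ≤ k → k < K → (T k).card = s)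
    (hcardK : (T K).card ≤ s)
    (hmono : ∀ k l, k < l → ∀ i ∈ T k, ∀ j ∈ T l, |δ j| ≤ |δ i|)
    -- the cone condition w.r.t. T₀
    (hcone : l1 (restr (T 0)ᶜ δ) ≤ k0 * l1 (restr (T 0) δ)) :
    ∑ k ∈ Finset.Icc 1 K, l2 (restr (T k) δ) ≤ (Real.sqrt s)⁻¹ * l1 δ ∧
      (Real.sqrt s)⁻¹ * l1 δ ≤ (k0 + 1) * l2 (restr (T 0) δ) :=
  stmt1_general p s K k0 hs hk0 δ T hdisj hT0card hcard hcardK hmono hcone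
end

section
/- For every 0 < ε ≤ 1/2 and every 1 ≤ m ≤ p, there exists a set Π ⊂ B₂^p (the unit Euclidean ball of ℝ^p) which is an ε-cover of Ũ_m = {x ∈ B₂^p : |supp(x)| ≤ m} in the Euclidean metric, satisfying Ũ_m ⊂ 2·conv(Π) and |Π| ≤ (5/(2ε))^m · C(p,m). -/
/-!
In each coordinate subspace `V_S` with `|S| = m`, a maximal `ε`-separated subset of the unit ball
containing `0` is an `ε`-net, and comparing volumes of the disjoint balls of radius `ε / 2` bounds
its size by `(1 + 2 / ε) ^ m ≤ (5 / (2 ε)) ^ m`; `Π` is the union of these `C(p, m)` nets.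
Every `x ∈ Ũ_m` is then `y + ε u` with `y ∈ Π` and `u ∈ Ũ_m`; iterating writes `x = ∑ εᵏ yₖ`, so
`(1 - ε) x ∈ conv Π`, and since `0 ∈ Π` and `ε ≤ 1 / 2` this gives `x ∈ 2 conv Π`.
-/

open Finset Metric Pointwise MeasureTheory Module

theorem exists_finset_pairwise_le_dist_cover {X : Type*} [PseudoMetricSpace X] {A : Set X}
    {a : X} {ε : ℝ} {B : ℕ} (hε : 0 < ε) (ha : a ∈ A)
    (hB : ∀ N : Finset X, ↑N ⊆ A → (N : Set X).Pairwise (ε ≤ dist · ·) → N.card ≤ B) :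
    ∃ N : Finset X, a ∈ N ∧ ↑N ⊆ A ∧ (N : Set X).Pairwise (ε ≤ dist · ·) ∧
      ∀ x ∈ A, ∃ y ∈ N, dist x y < ε := by
  classical
  set P : Finset X → Prop := fun N => a ∈ N ∧ ↑N ⊆ A ∧ (N : Set X).Pairwise (ε ≤ dist · ·)
  set cards : Set ℕ := {k | ∃ N, P N ∧ N.card = k}
  have hbdd : BddAbove cards := ⟨B, by rintro _ ⟨N, ⟨-, hNA, hN⟩, rfl⟩; exact hB N hNA hN⟩
  have hne : cards.Nonempty := ⟨1, {a}, ⟨mem_singleton_self a, by simpa using ha, by simp⟩, rfl⟩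
  obtain ⟨N, ⟨haN, hNA, hN⟩, hNcard⟩ := Nat.sSup_mem hne hbdd
  refine ⟨N, haN, hNA, hN, fun x hx => ?_⟩
  by_contra! hfar
  have hxN : x ∉ N := fun hxN => (hfar x hxN).not_gt (by simpa using hε)
  have hinsert : P (insert x N) := by
    refine ⟨mem_insert_of_mem haN, ?_, ?_⟩
    · simpa [Set.insert_subset_iff] using ⟨hx, hNA⟩
    · rw [coe_insert, Set.pairwise_insert]
      exact ⟨hN, fun y hy _ => ⟨hfar y hy, dist_comm x y ▸ hfar y hy⟩⟩
  have := le_csSup hbdd ⟨_, hinsert, rfl⟩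
  rw [card_insert_of_notMem hxN] at this
  omega

section FiniteDimensional

variable {E : Type*} [NormedAddCommGroup E] [NormedSpace ℝ E] [FiniteDimensional ℝ E]

/-- The balls of radius `ε / 2` around the points are disjoint and lie in the ball of radius
`1 + ε / 2`. -/
theorem card_le_of_pairwise_le_dist {N : Finset E} {ε : ℝ} (hε : 0 < ε)
    (hN : ↑N ⊆ closedBall (0 : E) 1) (hsep : (N : Set E).Pairwise (ε ≤ dist · ·)) :
    (N.card : ℝ) ≤ (1 + 2 / ε) ^ finrank ℝ E := by
  borelize E
  set μ : Measure E := Measure.addHaar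
  have hdisj : (N : Set E).PairwiseDisjoint (ball · (ε / 2)) := fun x hx y hy hxy =>
    ball_disjoint_ball (by linarith [hsep hx hy hxy])
  have hsub : (⋃ y ∈ N, ball y (ε / 2)) ⊆ ball 0 (1 + ε / 2) := by
    simp only [Set.iUnion_subset_iff]
    intro y hy z hz
    have := mem_closedBall_zero_iff.1 (hN hy)
    rw [mem_ball_zero_iff]
    linarith [norm_le_norm_add_norm_sub' z y, mem_ball_iff_norm.1 hz]
  have hvol : (N.card : ENNReal) * μ (ball 0 (ε / 2)) ≤ μ (ball 0 (1 + ε / 2)) :=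
    calc (N.card : ENNReal) * μ (ball 0 (ε / 2)) = ∑ y ∈ N, μ (ball y (ε / 2)) := by
          simp [Measure.addHaar_ball_center]
      _ = μ (⋃ y ∈ N, ball y (ε / 2)) :=
          (measure_biUnion_finset hdisj fun _ _ => measurableSet_ball).symm
      _ ≤ μ (ball 0 (1 + ε / 2)) := measure_mono hsub
  rw [Measure.addHaar_ball_of_pos μ _ (r := ε / 2) (by positivity),
    Measure.addHaar_ball_of_pos μ _ (r := 1 + ε / 2) (by positivity),
    ← mul_assoc, ENNReal.mul_le_mul_iff_left (measure_ball_pos μ 0 one_pos).ne'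
      measure_ball_lt_top.ne, ← ENNReal.ofReal_natCast, ← ENNReal.ofReal_mul (by positivity),
    ENNReal.ofReal_le_ofReal_iff (by positivity), ← le_div_iff₀ (by positivity), ← div_pow] at hvol
  rwa [show (1 + ε / 2) / (ε / 2) = 1 + 2 / ε by field_simp; ring] at hvol

theorem exists_finset_closedBall_cover {ε : ℝ} (hε : 0 < ε) :
    ∃ N : Finset E, (0 : E) ∈ N ∧ ↑N ⊆ closedBall (0 : E) 1 ∧
      (∀ x ∈ closedBall (0 : E) 1, ∃ y ∈ N, dist x y < ε) ∧
      (N.card : ℝ) ≤ (1 + 2 / ε) ^ finrank ℝ E := by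
  obtain ⟨N, h0, hN, hsep, hcover⟩ := exists_finset_pairwise_le_dist_cover hε
    (mem_closedBall_self (zero_le_one' ℝ) : (0 : E) ∈ closedBall 0 1) fun N hN hsep =>
      Nat.le_floor (card_le_of_pairwise_le_dist hε hN hsep)
  exact ⟨N, h0, hN, hcover, card_le_of_pairwise_le_dist hε hN hsep⟩

end FiniteDimensional

section ConvexHull

variable {E : Type*} [NormedAddCommGroup E] [NormedSpace ℝ E] {F : Finset E} {U : Set E} {ε r : ℝ}

/-- Unrolling `x = y₀ + ε • u₁ = y₀ + ε • y₁ + ε² • u₂ = ⋯` exhibits `(1 - ε) • x`, up to an error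
`ε ^ n * r`, as a convex combination of `0, y₀, …, yₙ₋₁` with weights `(1 - ε) εᵏ`. -/
theorem one_sub_smul_mem_convexHull (hε0 : 0 ≤ ε) (hε1 : ε < 1) (h0 : (0 : E) ∈ F)
    (hU : U ⊆ closedBall 0 r) (hstep : ∀ x ∈ U, ∃ y ∈ F, ∃ u ∈ U, x = y + ε • u)
    {x : E} (hx : x ∈ U) : (1 - ε) • x ∈ convexHull ℝ (F : Set E) := by
  have approx : ∀ n : ℕ, ∀ x ∈ U, ∃ c ∈ convexHull ℝ (F : Set E),
      ‖(1 - ε) • x - c‖ ≤ ε ^ n * r := by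
    intro n
    induction n with
    | zero =>
      intro x hx
      refine ⟨0, subset_convexHull ℝ _ h0, ?_⟩
      rw [sub_zero, norm_smul, Real.norm_of_nonneg (by linarith), pow_zero, one_mul]
      have := mem_closedBall_zero_iff.1 (hU hx)
      nlinarith [norm_nonneg x]
    | succ n ih =>
      intro x hx
      obtain ⟨y, hy, u, hu, rfl⟩ := hstep x hx
      obtain ⟨c, hc, hcu⟩ := ih u hu
      refine ⟨(1 - ε) • y + ε • c, convex_convexHull ℝ _ (subset_convexHull ℝ _ hy) hc
        (by linarith) hε0 (by ring), ?_⟩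
      calc ‖(1 - ε) • (y + ε • u) - ((1 - ε) • y + ε • c)‖ = ε * ‖(1 - ε) • u - c‖ := by
            rw [show (1 - ε) • (y + ε • u) - ((1 - ε) • y + ε • c) = ε • ((1 - ε) • u - c) by
              module, norm_smul, Real.norm_of_nonneg hε0]
        _ ≤ ε * (ε ^ n * r) := by gcongr
        _ = ε ^ (n + 1) * r := by ring
  have hclosed : IsClosed (convexHull ℝ (F : Set E)) :=
    (F.finite_toSet.isCompact_convexHull ℝ).isClosed
  refine hclosed.closure_subset_iff.2 le_rfl (Metric.mem_closure_iff.2 fun δ hδ => ?_)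
  have hlim : Filter.Tendsto (fun n : ℕ => ε ^ n * r) Filter.atTop (nhds 0) := by
    simpa using (tendsto_pow_atTop_nhds_zero_of_lt_one hε0 hε1).mul_const r
  obtain ⟨n, hn⟩ := (hlim.eventually (gt_mem_nhds hδ)).exists
  obtain ⟨c, hc, hcx⟩ := approx n x hx
  exact ⟨c, hc, by rw [dist_eq_norm]; linarith⟩

theorem subset_two_smul_convexHull (hε0 : 0 ≤ ε) (hε : ε ≤ 1 / 2) (h0 : (0 : E) ∈ F)
    (hU : U ⊆ closedBall 0 r) (hstep : ∀ x ∈ U, ∃ y ∈ F, ∃ u ∈ U, x = y + ε • u) :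
    U ⊆ (2 : ℝ) • convexHull ℝ (F : Set E) := by
  intro x hx
  have hK := one_sub_smul_mem_convexHull hε0 (by linarith) h0 hU hstep hx
  have hhalf : (2 * (1 - ε))⁻¹ • (1 - ε) • x ∈ convexHull ℝ (F : Set E) :=
    ((convex_convexHull ℝ _).starConvex (subset_convexHull ℝ _ h0)).smul_mem hK
      (inv_nonneg.2 (by linarith)) (inv_le_one_of_one_le₀ (by linarith))
  refine ⟨_, hhalf, ?_⟩
  change (2 : ℝ) • _ = x
  rw [smul_smul, smul_smul, show 2 * (2 * (1 - ε))⁻¹ * (1 - ε) = 1 by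
    field_simp [show 1 - ε ≠ 0 by linarith], one_smul]

end ConvexHull

section Coordinates

variable {ι : Type*}

def coordSubspace (S : Finset ι) : Submodule ℝ (EuclideanSpace ℝ ι) where
  carrier := {x | ∀ i ∉ S, x i = 0}
  add_mem' hx hy i hi := by simp [hx i hi, hy i hi]
  zero_mem' _ _ := rfl
  smul_mem' c x hx i hi := by simp [hx i hi]

theorem finrank_coordSubspace_le [Fintype ι] (S : Finset ι) :
    finrank ℝ (coordSubspace S) ≤ S.card := by
  let restrict : coordSubspace S →ₗ[ℝ] (S → ℝ) :=
    { toFun x i := x.1 i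
      map_add' _ _ := rfl
      map_smul' _ _ := rfl }
  have hinj : Function.Injective restrict := by
    intro x y hxy
    ext i
    by_cases hi : i ∈ S
    · exact congr_fun hxy ⟨i, hi⟩
    · rw [x.2 i hi, y.2 i hi]
  simpa using LinearMap.finrank_le_finrank_of_injective hinj

theorem exists_finset_cover_closedBall_inter_coordSubspace [Fintype ι] (S : Finset ι) {ε : ℝ}
    (hε : 0 < ε) :
    ∃ F : Finset (EuclideanSpace ℝ ι), (0 : EuclideanSpace ℝ ι) ∈ F ∧
      (F : Set (EuclideanSpace ℝ ι)) ⊆ closedBall 0 1 ∩ coordSubspace S ∧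
      (∀ x ∈ closedBall 0 1 ∩ (coordSubspace S : Set (EuclideanSpace ℝ ι)),
        ∃ y ∈ F, dist x y < ε) ∧
      (F.card : ℝ) ≤ (1 + 2 / ε) ^ S.card := by
  obtain ⟨N, h0, hN, hcover, hcard⟩ := exists_finset_closedBall_cover (E := coordSubspace S) hε
  refine ⟨N.map (Function.Embedding.subtype _), mem_map_of_mem _ h0, ?_, ?_, ?_⟩
  · simp only [coe_map, Set.image_subset_iff]
    intro y hy
    exact ⟨by simpa using hN hy, y.2⟩
  · rintro x ⟨hx, hxS⟩
    obtain ⟨y, hy, hxy⟩ := hcover ⟨x, hxS⟩ (by simpa using hx)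
    exact ⟨y, mem_map_of_mem _ hy, hxy⟩
  · rw [card_map]
    exact hcard.trans (pow_le_pow_right₀ (by simp; positivity) (finrank_coordSubspace_le S))

/-- The set `Ũ_m`. -/
def sparseUnitBall (ι : Type*) [Fintype ι] (m : ℕ) : Set (EuclideanSpace ℝ ι) :=
  {x | x ∈ closedBall 0 1 ∧ {i | x i ≠ 0}.Finite ∧ {i | x i ≠ 0}.ncard ≤ m}

theorem mem_sparseUnitBall_iff [Fintype ι] {m : ℕ} (hm : m ≤ Fintype.card ι)
    {x : EuclideanSpace ℝ ι} :
    x ∈ sparseUnitBall ι m ↔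
      x ∈ closedBall 0 1 ∧ ∃ S : Finset ι, S.card = m ∧ x ∈ coordSubspace S := by
  classical
  constructor
  · rintro ⟨hx, -, hxm⟩
    obtain ⟨S, hsupp, -, hS⟩ := exists_subsuperset_card_eq (n := m) (subset_univ {i | x i ≠ 0})
      (by rwa [← Set.ncard_coe_finset, coe_filter_univ]) (by rwa [card_univ])
    exact ⟨hx, S, hS, fun i hi => by_contra fun hxi => hi (hsupp (by simpa using hxi))⟩
  · rintro ⟨hx, S, rfl, hxS⟩
    have hsupp : {i | x i ≠ 0} ⊆ S := fun i hxi => by_contra fun hi => hxi (hxS i hi)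
    exact ⟨hx, S.finite_toSet.subset hsupp, Set.ncard_coe_finset S ▸ Set.ncard_le_ncard hsupp⟩

theorem exists_finset_sparseUnitBall_cover [Fintype ι] {m : ℕ} (hm : m ≤ Fintype.card ι)
    {ε : ℝ} (hε : 0 < ε) :
    ∃ Pi : Finset (EuclideanSpace ℝ ι), (0 : EuclideanSpace ℝ ι) ∈ Pi ∧
      (Pi : Set (EuclideanSpace ℝ ι)) ⊆ closedBall 0 1 ∧
      (∀ x ∈ sparseUnitBall ι m, ∃ y ∈ Pi, dist x y < ε ∧ ε⁻¹ • (x - y) ∈ sparseUnitBall ι m) ∧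
      (Pi.card : ℝ) ≤ (Fintype.card ι).choose m * (1 + 2 / ε) ^ m := by
  classical
  choose F hF0 hFsub hFcover hFcard using
    fun S : Finset ι => exists_finset_cover_closedBall_inter_coordSubspace S hε
  have hFPi : ∀ S : Finset ι, S.card = m → F S ⊆ (powersetCard m univ).biUnion F :=
    fun S hS => subset_biUnion_of_mem F (mem_powersetCard.2 ⟨subset_univ S, hS⟩)
  obtain ⟨S₀, -, hS₀⟩ := exists_subset_card_eq (s := (univ : Finset ι)) hm
  refine ⟨_, hFPi S₀ hS₀ (hF0 S₀), ?_, fun x hx => ?_, ?_⟩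
  · simp only [coe_biUnion, Set.iUnion_subset_iff]
    exact fun S _ => (hFsub S).trans Set.inter_subset_left
  · obtain ⟨hx1, S, hS, hxS⟩ := (mem_sparseUnitBall_iff hm).1 hx
    obtain ⟨y, hy, hxy⟩ := hFcover S x ⟨hx1, hxS⟩
    refine ⟨y, hFPi S hS hy, hxy, (mem_sparseUnitBall_iff hm).2 ⟨?_, S, hS, ?_⟩⟩
    · rw [mem_closedBall_zero_iff, norm_smul, norm_inv, Real.norm_of_nonneg hε.le,
        ← dist_eq_norm]
      exact inv_mul_le_one_of_le₀ hxy.le hε.le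
    · exact (coordSubspace S).smul_mem _ ((coordSubspace S).sub_mem hxS (hFsub S hy).2)
  · calc _ ≤ ∑ S ∈ powersetCard m univ, ((F S).card : ℝ) := by exact_mod_cast card_biUnion_le
      _ ≤ ∑ S ∈ powersetCard m univ, (1 + 2 / ε) ^ m :=
          sum_le_sum fun S hS => (mem_powersetCard.1 hS).2 ▸ hFcard S
      _ = _ := by rw [sum_const, card_powersetCard, card_univ, nsmul_eq_mul]

end Coordinates

theorem stmt8_general (p m : ℕ) (hmp : m ≤ p) (ε : ℝ) (hε : 0 < ε) (hε2 : ε ≤ 1 / 2) :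
    ∃ Pi : Finset (EuclideanSpace ℝ (Fin p)),
      (↑Pi : Set (EuclideanSpace ℝ (Fin p))) ⊆ closedBall 0 1 ∧
      (∀ x ∈ {x : EuclideanSpace ℝ (Fin p) |
          x ∈ closedBall (0 : EuclideanSpace ℝ (Fin p)) 1 ∧
          {i | x i ≠ 0}.Finite ∧ {i | x i ≠ 0}.ncard ≤ m},
        ∃ y ∈ Pi, dist x y ≤ ε) ∧
      {x : EuclideanSpace ℝ (Fin p) |
          x ∈ closedBall (0 : EuclideanSpace ℝ (Fin p)) 1 ∧
          {i | x i ≠ 0}.Finite ∧ {i | x i ≠ 0}.ncard ≤ m} ⊆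
        (2 : ℝ) • convexHull ℝ (↑Pi : Set (EuclideanSpace ℝ (Fin p))) ∧
      (Pi.card : ℝ) ≤ (5 / (2 * ε)) ^ m * (p.choose m : ℝ) := by
  obtain ⟨Pi, h0, hball, hstep, hcard⟩ :=
    exists_finset_sparseUnitBall_cover (ι := Fin p) (by simpa using hmp) hε
  refine ⟨Pi, hball, fun x hx => ?_, ?_, ?_⟩
  · obtain ⟨y, hy, hxy, -⟩ := hstep x hx
    exact ⟨y, hy, hxy.le⟩
  · refine subset_two_smul_convexHull hε.le hε2 h0 (fun x hx => hx.1) fun x hx => ?_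
    obtain ⟨y, hy, -, hu⟩ := hstep x hx
    exact ⟨y, hy, _, hu, by rw [smul_inv_smul₀ hε.ne', add_sub_cancel]⟩
  · have hbase : 1 + 2 / ε ≤ 5 / (2 * ε) := by
      rw [show 5 / (2 * ε) = 1 / (2 * ε) + 2 / ε by field_simp; norm_num,
        add_le_add_iff_right, one_le_div₀ (by positivity)]
      linarith
    calc _ ≤ _ := hcard
      _ ≤ _ := by rw [Fintype.card_fin, mul_comm]; gcongr

/-- For 0 < ε ≤ 1/2 and 1 ≤ m ≤ p, there is an ε-cover Pi ⊂ B₂^p of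
Ũ_m = {x ∈ B₂^p : |supp(x)| ≤ m} with Ũ_m ⊂ 2·conv(Pi) and |Pi| ≤ (5/(2ε))^m · C(p,m). -/
theorem stmt8 (p m : ℕ) (hm : 1 ≤ m) (hmp : m ≤ p) (ε : ℝ) (hε : 0 < ε) (hε2 : ε ≤ 1 / 2) :
    ∃ Pi : Finset (EuclideanSpace ℝ (Fin p)),
      (↑Pi : Set (EuclideanSpace ℝ (Fin p))) ⊆ closedBall 0 1 ∧
      (∀ x ∈ {x : EuclideanSpace ℝ (Fin p) |
          x ∈ closedBall (0 : EuclideanSpace ℝ (Fin p)) 1 ∧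
          {i | x i ≠ 0}.Finite ∧ {i | x i ≠ 0}.ncard ≤ m},
        ∃ y ∈ Pi, dist x y ≤ ε) ∧
      {x : EuclideanSpace ℝ (Fin p) |
          x ∈ closedBall (0 : EuclideanSpace ℝ (Fin p)) 1 ∧
          {i | x i ≠ 0}.Finite ∧ {i | x i ≠ 0}.ncard ≤ m} ⊆
        (2 : ℝ) • convexHull ℝ (↑Pi : Set (EuclideanSpace ℝ (Fin p))) ∧
      (Pi.card : ℝ) ≤ (5 / (2 * ε)) ^ m * (p.choose m : ℝ) :=
  stmt8_general p m hmp ε hε hε2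
end

section
/- Suppose the RE condition RE(s,k₀,Σ) holds with k₀ ≥ 1 for a p×p matrix Σ with Σ_{ii} = 1. Then every principal submatrix of Σ of size at most 2s is positive definite; equivalently, for every t ∈ ℝ^p with t ≠ 0 and |supp(t)| ≤ 2s, one has ‖Σ^{1/2}t‖₂ > 0. -/
open Finset

/-! A vector supported on at most `2s` coordinates splits into two halves of at most `s`
coordinates each; the half carrying the larger `ℓ₁` mass is a set `J₀` for which the vector lies
in the cone `‖v_{J₀ᶜ}‖₁ ≤ ‖v_{J₀}‖₁ ≤ k₀‖v_{J₀}‖₁`, and `v_{J₀} ≠ 0`. The RE inequality then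
gives `0 < ‖v_{J₀}‖₂ ≤ K‖Rv‖₂`. -/

section

variable {p : ℕ}

lemma l1_nonneg (v : Fin p → ℝ) : 0 ≤ l1 v :=
  sum_nonneg fun i _ => abs_nonneg (v i)

lemma l2_nonneg (v : Fin p → ℝ) : 0 ≤ l2 v := Real.sqrt_nonneg _

lemma l1_eq_zero_iff {v : Fin p → ℝ} : l1 v = 0 ↔ v = 0 := by
  rw [l1, Fintype.sum_eq_zero_iff_of_nonneg fun i => abs_nonneg (v i), funext_iff, funext_iff]
  simp

lemma l2_pos_iff {v : Fin p → ℝ} : 0 < l2 v ↔ v ≠ 0 := by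
  rw [l2, Real.sqrt_pos, (Fintype.sum_nonneg fun i => sq_nonneg (v i)).lt_iff_ne',
    Ne, Fintype.sum_eq_zero_iff_of_nonneg fun i => sq_nonneg (v i), funext_iff]
  simp [funext_iff]

lemma restr_add_restr_compl (J : Finset (Fin p)) (v : Fin p → ℝ) :
    restr J v + restr Jᶜ v = v := by
  ext i
  by_cases hi : i ∈ J <;> simp [restr, hi]

lemma l1_restr_add_l1_restr_compl (J : Finset (Fin p)) (v : Fin p → ℝ) :
    l1 (restr J v) + l1 (restr Jᶜ v) = l1 v := by
  simp only [l1, ← sum_add_distrib]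
  refine sum_congr rfl fun i _ => ?_
  by_cases hi : i ∈ J <;> simp [restr, hi]

lemma restr_compl_eq_restr_sdiff {T : Finset (Fin p)} {v : Fin p → ℝ}
    (hv : ∀ i, v i ≠ 0 → i ∈ T) (J : Finset (Fin p)) : restr Jᶜ v = restr (T \ J) v := by
  ext i
  by_cases hiJ : i ∈ J
  · simp [restr, hiJ]
  · by_cases hiT : i ∈ T
    · simp [restr, hiJ, hiT]
    · simp [restr, hiJ, hiT, not_imp_comm.1 (hv i) hiT]

lemma restr_ne_zero_of_l1_restr_compl_le {J : Finset (Fin p)} {v : Fin p → ℝ} (hv : v ≠ 0)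
    (hcone : l1 (restr Jᶜ v) ≤ l1 (restr J v)) : restr J v ≠ 0 := by
  intro hJ
  have hJc : restr Jᶜ v = 0 := by
    rw [hJ, l1_eq_zero_iff.2 rfl] at hcone
    exact l1_eq_zero_iff.1 (hcone.antisymm (l1_nonneg _))
  exact hv (by rw [← restr_add_restr_compl J v, hJ, hJc, add_zero])

lemma exists_card_le_l1_restr_compl_le {s : ℕ} (v : Fin p → ℝ)
    (hv : (univ.filter fun i => v i ≠ 0).card ≤ 2 * s) :
    ∃ J : Finset (Fin p), J.card ≤ s ∧ l1 (restr Jᶜ v) ≤ l1 (restr J v) := by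
  set T := univ.filter fun i => v i ≠ 0
  have hsupp : ∀ i, v i ≠ 0 → i ∈ T := fun i hi => mem_filter.2 ⟨mem_univ i, hi⟩
  obtain ⟨A, hAT, hA⟩ := exists_subset_card_eq (min_le_right s T.card)
  have hA_le : A.card ≤ s := hA ▸ min_le_left _ _
  have hB_le : (T \ A).card ≤ s := by rw [card_sdiff_of_subset hAT]; omega
  have hA_compl := restr_compl_eq_restr_sdiff hsupp A
  have hB_compl : restr (T \ A)ᶜ v = restr A v := by
    rw [restr_compl_eq_restr_sdiff hsupp, Finset.sdiff_sdiff_eq_self hAT]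
  rcases le_total (l1 (restr (T \ A) v)) (l1 (restr A v)) with h | h
  · exact ⟨A, hA_le, hA_compl ▸ h⟩
  · exact ⟨T \ A, hB_le, hB_compl ▸ h⟩

end

theorem stmt19_general (p s : ℕ) (k0 : ℝ) (hk0 : 1 ≤ k0)
    (R : Matrix (Fin p) (Fin p) ℝ)
    (K : ℝ)
    -- RE(s,k₀,Σ) with constant K
    (hRE : ∀ J0 : Finset (Fin p), J0.card ≤ s → ∀ v : Fin p → ℝ, v ≠ 0 →
      l1 (restr J0ᶜ v) ≤ k0 * l1 (restr J0 v) → l2 (restr J0 v) ≤ K * l2 (R.mulVec v)) :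
    ∀ t : Fin p → ℝ, t ≠ 0 → (Finset.univ.filter fun i => t i ≠ 0).card ≤ 2 * s →
      0 < l2 (R.mulVec t) := by
  intro t ht hcard
  obtain ⟨J0, hJ0, hcone⟩ := exists_card_le_l1_restr_compl_le t hcard
  have hRt := hRE J0 hJ0 t ht (hcone.trans (le_mul_of_one_le_left (l1_nonneg _) hk0))
  have hpos : 0 < K * l2 (R.mulVec t) :=
    (l2_pos_iff.2 (restr_ne_zero_of_l1_restr_compl_le ht hcone)).trans_le hRt
  exact (l2_nonneg _).lt_of_ne fun h => by simp [← h] at hpos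

/-- if RE(s,k₀,Σ) holds with k₀ ≥ 1, then ‖Σ^{1/2}t‖₂ > 0 for every
nonzero t with |supp(t)| ≤ 2s (equivalently, all principal submatrices of Σ of
size ≤ 2s are positive definite). -/
theorem stmt19 (p s : ℕ) (hs : 1 ≤ s) (hsp : 2 * s ≤ p) (k0 : ℝ) (hk0 : 1 ≤ k0)
    (Sig R : Matrix (Fin p) (Fin p) ℝ)
    (hpsd : Sig.PosSemidef) (hdiag : ∀ i, Sig i i = 1)
    (hRpsd : R.PosSemidef) (hRsq : R * R = Sig)
    (K : ℝ) (hK : 0 < K)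
    -- RE(s,k₀,Σ) with constant K
    (hRE : ∀ J0 : Finset (Fin p), J0.card ≤ s → ∀ v : Fin p → ℝ, v ≠ 0 →
      l1 (restr J0ᶜ v) ≤ k0 * l1 (restr J0 v) → l2 (restr J0 v) ≤ K * l2 (R.mulVec v)) :
    ∀ t : Fin p → ℝ, t ≠ 0 → (Finset.univ.filter fun i => t i ≠ 0).card ≤ 2 * s →
      0 < l2 (R.mulVec t) :=
  stmt19_general p s k0 hk0 R K hRE
end
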